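/- arXiv:1904.04255 — 3 statements merged into one kernel-verified Lean document; each statement's English description precedes it below -/
import Mathlib

section
/- Let (E,C) be any finitely separated graph, let F be the free commutative monoid on E⁰, and let → be the rewriting relation on F defined below (extended by 0 → 0). If α, β ∈ F∖{0} satisfy α = α₁ + α₂ and α → β, then β can be written as β = β₁ + β₂ with α₁ → β₁ and α₂ → β₂. -/
/-- A (finitely) separated graph `(E,C)`: a directed graph together with,
for each vertex `v`, a partition `C v` of `s⁻¹(v)` into pairwise disjoint
nonempty finite subsets. -/
structure SepGraph where
  V : Type
  Ed : Type
  s : Ed → V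
  r : Ed → V
  C : V → Set (Finset Ed)
  c_src : ∀ v : V, ∀ X ∈ C v, ∀ e ∈ X, s e = v
  c_nonempty : ∀ v : V, ∀ X ∈ C v, X.Nonempty
  c_disjoint : ∀ v : V, ∀ X ∈ C v, ∀ Y ∈ C v, X ≠ Y → Disjoint X Y
  c_cover : ∀ e : Ed, ∃ X ∈ C (s e), e ∈ X

namespace SepGraph

variable (G : SepGraph)

/-- There is an edge from `v` to `w`. -/
def Edge (v w : G.V) : Prop := ∃ e : G.Ed, G.s e = v ∧ G.r e = w

/-- There is a directed path from `v` to `w`. -/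
def Reach : G.V → G.V → Prop := Relation.ReflTransGen G.Edge

/-- Mutual reachability: `v` and `w` lie in the same component, i.e. `[v] = [w]`. -/
def VEquiv (v w : G.V) : Prop := G.Reach v w ∧ G.Reach w v

/-- `[v] ≤ [w]` in the antisymmetrization poset `I` of `E⁰`. -/
def VLe (v w : G.V) : Prop := G.Reach w v

/-- `[v] < [w]` in the antisymmetrization poset `I` of `E⁰`. -/
def VLt (v w : G.V) : Prop := G.Reach w v ∧ ¬ G.Reach v w

/-- The free commutative monoid `F` on the vertex set `E⁰`. -/
abbrev FreeM := G.V →₀ ℕ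

/-- The basis element of `F` corresponding to a vertex. -/
noncomputable def vert (v : G.V) : G.FreeM := Finsupp.single v 1

/-- `r(X) = Σ_{e ∈ X} r(e)` as an element of `F`. -/
noncomputable def rX (X : Finset G.Ed) : G.FreeM := ∑ e ∈ X, Finsupp.single (G.r e) 1

/-- The defining relations of `M(E,C)`: `a_v = Σ_{e ∈ X} a_{r(e)}` for `X ∈ C_v`. -/
def Rel : G.FreeM → G.FreeM → Prop := fun a b =>
  ∃ v : G.V, ∃ X ∈ G.C v, a = G.vert v ∧ b = G.rX X

/-- The congruence on `F` generated by the defining relations. -/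
noncomputable def mCon : AddCon G.FreeM := addConGen G.Rel

/-- The monoid `M(E,C)` of the separated graph `(E,C)`. -/
def M := G.mCon.Quotient

noncomputable instance : AddCommMonoid G.M := inferInstanceAs (AddCommMonoid G.mCon.Quotient)

/-- The generator `a_v` of `M(E,C)`. -/
noncomputable def gen (v : G.V) : G.M := G.mCon.mk' (G.vert v)

end SepGraph

/-- The data witnessing that a separated graph is *adaptable*: the
antisymmetrization `I` of `E⁰` is finite, it is partitioned into free and
regular elements (with free components reduced to a single vertex `v^p`),
and the conditions of Definition 1.6 of the paper hold.  Here, for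
`p ∈ I_reg`, the subgraph `E_p` is the restriction of `E` to the class `p`. -/
structure SepGraph.AdaptableStructure (G : SepGraph) where
  /-- the partition `I = I_free ⊔ I_reg` (a vertex is free if its class is free) -/
  free : G.V → Prop
  /-- `I` is a finite poset -/
  finite_components : Finite (Quot G.VEquiv)
  free_respects : ∀ v w : G.V, G.VEquiv v w → (free v ↔ free w)
  /-- a free component consists of a single vertex `E_p⁰ = {v^p}` -/
  free_singleton : ∀ v : G.V, free v → ∀ w : G.V, G.VEquiv w v → w = v
  /-- for free `p`, `s⁻¹(v^p) = ∅` iff `p` is minimal in `I` -/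
  free_minimal : ∀ v : G.V, free v →
    ((¬ ∃ e : G.Ed, G.s e = v) ↔ ∀ w : G.V, G.Reach v w → G.VEquiv v w)
  /-- for free non-minimal `p`, `C_{v^p} = {X₁,…,X_{k(p)}}` is a finite family -/
  free_C_finite : ∀ v : G.V, free v → (G.C v).Finite
  /-- each `X_i ∈ C_{v^p}` contains exactly one loop `α(p,i)` at `v^p` -/
  free_loop : ∀ v : G.V, free v → ∀ X ∈ G.C v, ∃! e : G.Ed, e ∈ X ∧ G.r e = v
  /-- the remaining edges `β(p,i,t)` of `X_i` end in strictly smaller components -/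
  free_targets : ∀ v : G.V, free v → ∀ X ∈ G.C v, ∀ e ∈ X, G.r e = v ∨ G.VLt (G.r e) v
  /-- `g(p,i) ≥ 1`: there is at least one connector `β(p,i,1)` in each `X_i` -/
  free_beta : ∀ v : G.V, free v → ∀ X ∈ G.C v, ∃ e ∈ X, G.r e ≠ v
  /-- for regular `p` and `w ∈ E_p⁰`, `|C_w| = 1` -/
  reg_unique_C : ∀ w : G.V, ¬ free w → ∃! X : Finset G.Ed, X ∈ G.C w
  /-- for regular `p` and `w ∈ E_p⁰`, `|s_{E_p}⁻¹(w)| ≥ 2` -/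
  reg_two_edges : ∀ w : G.V, ¬ free w → ∃ e₁ e₂ : G.Ed, e₁ ≠ e₂ ∧ G.s e₁ = w ∧ G.s e₂ = w ∧
    G.VEquiv (G.r e₁) w ∧ G.VEquiv (G.r e₂) w
  /-- every edge leaving `w ∈ E_p⁰` stays in `E_p` or goes to some `E_q⁰` with `q < p` -/
  reg_targets : ∀ w : G.V, ¬ free w → ∀ e : G.Ed, G.s e = w →
    G.VEquiv (G.r e) w ∨ G.VLt (G.r e) w

namespace SepGraph

variable (G : SepGraph)

/-- One step `→₁` of the rewriting relation on `F∖{0}`: replace one occurrence of a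
vertex `v` of the support by `r(X)`, for some `X ∈ C_v`. -/
def Step : G.FreeM → G.FreeM → Prop := fun a b =>
  ∃ (v : G.V) (X : Finset G.Ed) (a' : G.FreeM),
    X ∈ G.C v ∧ a = G.vert v + a' ∧ b = a' + G.rX X

/-- The rewriting relation `→`: the reflexive and transitive closure of `→₁`
(in particular `0 → 0`). -/
def Rw : G.FreeM → G.FreeM → Prop := Relation.ReflTransGen G.Step

end SepGraph

namespace SepGraph

variable {G : SepGraph}

theorem vert_le_or_vert_le_of_vert_le_add {v : G.V} {γ₁ γ₂ : G.FreeM}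
    (h : G.vert v ≤ γ₁ + γ₂) : G.vert v ≤ γ₁ ∨ G.vert v ≤ γ₂ := by
  simp only [vert, Finsupp.single_le_iff, Finsupp.add_apply] at h ⊢
  omega

theorem Step.exists_left_of_vert_le {v : G.V} {X : Finset G.Ed} {a' γ₁ γ₂ : G.FreeM}
    (hX : X ∈ G.C v) (hsum : G.vert v + a' = γ₁ + γ₂) (hv : G.vert v ≤ γ₁) :
    ∃ β₁, G.Step γ₁ β₁ ∧ a' + G.rX X = β₁ + γ₂ := by
  obtain ⟨γ₁', rfl⟩ := exists_add_of_le hv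
  have ha' : a' = γ₁' + γ₂ := add_left_cancel (hsum.trans (add_assoc _ _ _))
  exact ⟨γ₁' + G.rX X, ⟨v, X, γ₁', hX, rfl, rfl⟩, ha' ▸ add_right_comm _ _ _⟩

theorem Step.exists_of_add {γ₁ γ₂ β : G.FreeM} (h : G.Step (γ₁ + γ₂) β) :
    (∃ β₁, G.Step γ₁ β₁ ∧ β = β₁ + γ₂) ∨ (∃ β₂, G.Step γ₂ β₂ ∧ β = γ₁ + β₂) := by
  obtain ⟨v, X, a', hX, hsum, rfl⟩ := h
  rcases vert_le_or_vert_le_of_vert_le_add (hsum.symm ▸ le_self_add) with hv | hv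
  · exact .inl (Step.exists_left_of_vert_le hX hsum.symm hv)
  · obtain ⟨β₂, hstep, hβ⟩ := Step.exists_left_of_vert_le hX (hsum.symm.trans (add_comm _ _)) hv
    exact .inr ⟨β₂, hstep, hβ.trans (add_comm _ _)⟩

theorem Rw.exists_of_add {α₁ α₂ β : G.FreeM} (h : G.Rw (α₁ + α₂) β) :
    ∃ β₁ β₂ : G.FreeM, β = β₁ + β₂ ∧ G.Rw α₁ β₁ ∧ G.Rw α₂ β₂ := by
  induction h with
  | refl => exact ⟨α₁, α₂, rfl, .refl, .refl⟩
  | tail _ hstep ih =>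
    obtain ⟨γ₁, γ₂, rfl, h₁, h₂⟩ := ih
    rcases hstep.exists_of_add with ⟨β₁, hs, rfl⟩ | ⟨β₂, hs, rfl⟩
    · exact ⟨β₁, γ₂, rfl, h₁.tail hs, h₂⟩
    · exact ⟨γ₁, β₂, rfl, h₁, h₂.tail hs⟩

end SepGraph

theorem stmt3_general (G : SepGraph) (α α₁ α₂ β : G.FreeM)
    (hsum : α = α₁ + α₂) (h : G.Rw α β) :
    ∃ β₁ β₂ : G.FreeM, β = β₁ + β₂ ∧ G.Rw α₁ β₁ ∧ G.Rw α₂ β₂ :=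
  (hsum ▸ h).exists_of_add

/-- (cf. Lemma 2.3) Let `(E,C)` be any finitely separated graph.  If
`α = α₁ + α₂` with `α, β ∈ F∖{0}` and `α → β`, then `β = β₁ + β₂` where `α₁ → β₁` and
`α₂ → β₂`. -/
theorem stmt3 (G : SepGraph) (α α₁ α₂ β : G.FreeM) (hα : α ≠ 0) (hβ : β ≠ 0)
    (hsum : α = α₁ + α₂) (h : G.Rw α β) :
    ∃ β₁ β₂ : G.FreeM, β = β₁ + β₂ ∧ G.Rw α₁ β₁ ∧ G.Rw α₂ β₂ :=
  stmt3_general G α α₁ α₂ β hsum h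
end

section
/- Let (E,C) be an adaptable separated graph, let F be the free commutative monoid on E⁰, let → be the rewriting relation on F∖{0} and ∼ the congruence on F generated by →₁. Then for nonzero α, β ∈ F, one has α ∼ β if and only if there exists γ ∈ F such that α → γ and β → γ. -/
/-!
A rewriting step replaces one vertex `v` by `r(X)` for some `X ∈ C_v`. Two steps at different
occurrences commute, and two steps at the same vertex `v` can only disagree when `|C_v| ≥ 2`.
In an adaptable graph that happens only at a free vertex, where every `X ∈ C_v` contains a loop,
so `r(X) = v + B`: from `a' + r(X)` and `a' + r(Y)` one more step on the remaining copy of `v`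
reaches `a' + r(X) + r(Y) - v` in both cases. Hence `→₁` has the one-step diamond property,
`→` is Church–Rosser, and joinability under `→` is an equivalence compatible with addition,
i.e. a congruence; it contains `→₁` and is contained in `∼`, so it equals `∼`.
-/

open Finsupp in
theorem Finsupp.single_one_add_eq_single_one_add {ι : Type*} {v w : ι} {a b : ι →₀ ℕ}
    (h : single v 1 + a = single w 1 + b) :
    (v = w ∧ a = b) ∨ ∃ c, a = single w 1 + c ∧ b = single v 1 + c := by
  by_cases hvw : v = w
  · subst hvw
    exact Or.inl ⟨rfl, add_left_cancel h⟩
  · right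
    have hw : 1 ≤ a w := by
      have := congrArg (· w) h
      simp only [Finsupp.add_apply, single_eq_same, single_eq_of_ne' hvw] at this
      omega
    obtain ⟨c, rfl⟩ := exists_add_of_le (single_le_iff.mpr hw)
    refine ⟨c, rfl, add_left_cancel (a := single w 1) ?_⟩
    rw [← h, add_left_comm]

namespace SepGraph

variable (G : SepGraph)

def HasLoopsAtBranchings : Prop :=
  ∀ v, (G.C v).Subsingleton ∨ ∀ X ∈ G.C v, ∃ e ∈ X, G.r e = v

theorem AdaptableStructure.hasLoopsAtBranchings {G : SepGraph} (A : G.AdaptableStructure) :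
    G.HasLoopsAtBranchings := by
  intro v
  by_cases hv : A.free v
  · exact .inr fun X hX ↦ (A.free_loop v hv X hX).exists
  · obtain ⟨X₀, -, hu⟩ := A.reg_unique_C v hv
    exact .inl fun X hX Y hY ↦ (hu X hX).trans (hu Y hY).symm

lemma step_add_right {a b : G.FreeM} (c : G.FreeM) (h : G.Step a b) :
    G.Step (a + c) (b + c) := by
  obtain ⟨v, X, a', hX, rfl, rfl⟩ := h
  exact ⟨v, X, a' + c, hX, by abel, by abel⟩

lemma rw_add_right {a b : G.FreeM} (c : G.FreeM) (h : G.Rw a b) : G.Rw (a + c) (b + c) :=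
  Relation.ReflTransGen.lift (· + c) (fun _ _ ↦ G.step_add_right c) _ _ h

lemma rw_add {a b c d : G.FreeM} (hab : G.Rw a b) (hcd : G.Rw c d) : G.Rw (a + c) (b + d) :=
  (G.rw_add_right c hab).trans (by rw [add_comm b, add_comm b]; exact G.rw_add_right b hcd)

lemma rX_eq_vert_add_of_loop {v : G.V} {X : Finset G.Ed} {e : G.Ed} (he : e ∈ X)
    (hr : G.r e = v) : ∃ B : G.FreeM, G.rX X = G.vert v + B := by
  classical
  exact ⟨∑ e ∈ X.erase e, Finsupp.single (G.r e) 1, by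
    rw [rX, ← Finset.add_sum_erase _ _ he, hr, vert]⟩

theorem step_diamond (hG : G.HasLoopsAtBranchings) {a b c : G.FreeM} (hab : G.Step a b) (hac : G.Step a c) :
    ∃ d, Relation.ReflGen G.Step b d ∧ G.Rw c d := by
  obtain ⟨v, X, a₁, hX, rfl, rfl⟩ := hab
  obtain ⟨w, Y, a₂, hY, heq, rfl⟩ := hac
  rcases Finsupp.single_one_add_eq_single_one_add heq with ⟨rfl, rfl⟩ | ⟨a₀, rfl, rfl⟩
  · rcases hG v with hsub | hloop
    · rw [hsub hX hY]
      exact ⟨_, .refl, .refl⟩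
    · obtain ⟨e, he, hr⟩ := hloop X hX
      obtain ⟨e', he', hr'⟩ := hloop Y hY
      obtain ⟨B, hB⟩ := G.rX_eq_vert_add_of_loop he hr
      obtain ⟨B', hB'⟩ := G.rX_eq_vert_add_of_loop he' hr'
      refine ⟨a₁ + B + G.rX Y, .single ⟨v, Y, a₁ + B, hY, by rw [hB]; abel, rfl⟩,
        .single ⟨v, X, a₁ + B', hX, by rw [hB']; abel, by rw [hB, hB']; abel⟩⟩
  · simp only [← vert.eq_1]
    refine ⟨a₀ + G.rX X + G.rX Y, .single ⟨w, Y, a₀ + G.rX X, hY, by abel, rfl⟩,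
      .single ⟨v, X, a₀ + G.rX Y, hX, by abel, by abel⟩⟩

def joinCon (hG : G.HasLoopsAtBranchings) : AddCon G.FreeM where
  r := Relation.Join G.Rw
  iseqv := Relation.equivalence_join_reflTransGen fun _ _ _ ↦ G.step_diamond hG
  add' := fun ⟨γ, hwγ, hxγ⟩ ⟨δ, hyδ, hzδ⟩ ↦ ⟨γ + δ, G.rw_add hwγ hyδ, G.rw_add hxγ hzδ⟩

lemma addConGen_step_of_rw {a b : G.FreeM} (h : G.Rw a b) : addConGen G.Step a b := by
  induction h with
  | refl => exact (addConGen G.Step).refl _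
  | tail _ hstep ih => exact (addConGen G.Step).trans ih (AddConGen.Rel.of _ _ hstep)

theorem addConGen_step_eq_joinCon (hG : G.HasLoopsAtBranchings) :
    addConGen G.Step = G.joinCon hG :=
  le_antisymm
    (AddCon.addConGen_le.mpr fun _ b h ↦ ⟨b, .single h, .refl⟩)
    (fun _ _ ⟨_, hαγ, hβγ⟩ ↦
      (G.addConGen_step_of_rw hαγ).trans (G.addConGen_step_of_rw hβγ).symm)

end SepGraph

theorem stmt4_general (G : SepGraph) (A : G.AdaptableStructure) (α β : G.FreeM) :
    (addConGen G.Step) α β ↔ ∃ γ : G.FreeM, G.Rw α γ ∧ G.Rw β γ := by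
  rw [G.addConGen_step_eq_joinCon A.hasLoopsAtBranchings]
  rfl

/-- (Confluence) Let `(E,C)` be an adaptable separated graph and let
`∼` be the congruence on `F` generated by `→₁`.  For nonzero `α, β ∈ F`, `α ∼ β` iff
there is `γ ∈ F` with `α → γ` and `β → γ`. -/
theorem stmt4 (G : SepGraph) (A : G.AdaptableStructure) (α β : G.FreeM)
    (hα : α ≠ 0) (hβ : β ≠ 0) :
    (addConGen G.Step) α β ↔ ∃ γ : G.FreeM, G.Rw α γ ∧ G.Rw β γ :=
  stmt4_general G A α β
end

section
/- Let (E,C) be an adaptable separated graph and let H ⊆ E⁰ be a hereditary subset. Let (E_H, C^H) be the restriction of (E,C) to H, i.e., E_H has vertex set H and edge set {e ∈ E¹ : s(e) ∈ H}, with C^H the induced partitions. Then the natural monoid homomorphism M(E_H,C^H) → M(E,C) sending a_v to a_v (v ∈ H) is injective, and its image is an order-ideal of M(E,C). -/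
/-- The algebraic pre-order on a commutative monoid: `x ≤ y` iff `x + z = y` for some `z`. -/
def MLe {M : Type} [AddCommMonoid M] (x y : M) : Prop := ∃ z, x + z = y

/-- A commutative monoid is conical if `x + y = 0` implies `x = y = 0`. -/
def IsConical (M : Type) [AddCommMonoid M] : Prop := ∀ x y : M, x + y = 0 → x = 0 ∧ y = 0

/-- The refinement property for a commutative monoid. -/
def IsRefinement (M : Type) [AddCommMonoid M] : Prop := ∀ a b c d : M, a + b = c + d →
  ∃ w x y z : M, a = w + x ∧ b = y + z ∧ c = w + y ∧ d = x + z

/-- `p` is a prime element: it is not invertible, and `p ≤ a + b` implies `p ≤ a` or `p ≤ b`. -/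
def IsPrimeElem {M : Type} [AddCommMonoid M] (p : M) : Prop :=
  (¬ ∃ q, p + q = 0) ∧ ∀ a b : M, MLe p (a + b) → MLe p a ∨ MLe p b

/-- A commutative monoid is primely generated if every non-invertible element is a
sum of prime elements. -/
def IsPrimelyGenerated (M : Type) [AddCommMonoid M] : Prop :=
  ∀ x : M, (¬ ∃ q, x + q = 0) → ∃ l : Multiset M, (∀ p ∈ l, IsPrimeElem p) ∧ x = l.sum

/-- A subset of a commutative monoid is an order-ideal if it is a submonoid which is
hereditary for the algebraic pre-order. -/
def IsOrderIdeal {M : Type} [AddCommMonoid M] (S : Set M) : Prop :=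
  (0 : M) ∈ S ∧ (∀ x ∈ S, ∀ y ∈ S, x + y ∈ S) ∧ ∀ x y : M, MLe x y → y ∈ S → x ∈ S

namespace SepGraph

/-- The restriction `(E_H, C^H)` of a separated graph `(E,C)` to a hereditary subset
`H ⊆ E⁰`: its vertex set is `H`, its edges are the edges of `E` with source in `H`,
and the partitions are the induced ones. -/
noncomputable def restrict (G : SepGraph) (H : Set G.V)
    (hH : ∀ e : G.Ed, G.s e ∈ H → G.r e ∈ H) : SepGraph where
  V := H
  Ed := {e : G.Ed // G.s e ∈ H}
  s := fun e => ⟨G.s e.1, e.2⟩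
  r := fun e => ⟨G.r e.1, hH e.1 e.2⟩
  C := fun v => {X : Finset {e : G.Ed // G.s e ∈ H} |
    X.map (Function.Embedding.subtype fun e => G.s e ∈ H) ∈ G.C v.1}
  c_src := by
    intro v X hX e he
    exact Subtype.ext (G.c_src v.1 _ hX e.1 (Finset.mem_map_of_mem _ he))
  c_nonempty := by
    intro v X hX
    obtain ⟨a, ha⟩ := G.c_nonempty v.1 _ hX
    rw [Finset.mem_map] at ha
    obtain ⟨b, hb, rfl⟩ := ha
    exact ⟨b, hb⟩
  c_disjoint := by
    intro v X hX Y hY hne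
    exact (Finset.disjoint_map _).mp
      (G.c_disjoint v.1 _ hX _ hY (fun h => hne (Finset.map_injective _ h)))
  c_cover := by
    classical
    intro e
    obtain ⟨X, hX, he⟩ := G.c_cover e.1
    have hmem : ∀ x ∈ X, G.s x ∈ H := by
      intro x hx
      rw [G.c_src (G.s e.1) X hX x hx]
      exact e.2
    refine ⟨X.subtype (fun e => G.s e ∈ H), ?_, ?_⟩
    · show (X.subtype _).map _ ∈ G.C _
      rw [Finset.subtype_map]
      rwa [Finset.filter_true_of_mem hmem]
    · simpa using he

end SepGraph

/-!
For `v ∉ H`, every `X ∈ C_v` contains an edge ending outside `H`: the loop at a free vertex,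
or, at a regular vertex (where `C_v = {X}`), an edge back into the component of `v`, which `H`,
being hereditary, cannot meet. So `⊤` absorbs both sides of every relation at `v ∉ H`, and
`a_v ↦ a_v` (`v ∈ H`), `a_v ↦ ⊤` (`v ∉ H`) defines `π : M(E,C) → M(E_H,C^H) ∪ {⊤}` with
`π ∘ ι = id` for the natural map `ι`. Hence `ι` is injective, and its image is `{x | π x ≠ ⊤}`,
an order-ideal because `⊤` is absorbing.
-/

namespace SepGraph

theorem Reach.mem_of_hereditary {G : SepGraph} {H : Set G.V}
    (hH : ∀ e : G.Ed, G.s e ∈ H → G.r e ∈ H) {u w : G.V} (h : G.Reach u w) (hu : u ∈ H) :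
    w ∈ H := by
  induction h with
  | refl => exact hu
  | tail _ hbc ih =>
    obtain ⟨e, hs, hr⟩ := hbc
    exact hr ▸ hH e (hs ▸ ih)

theorem AdaptableStructure.exists_target_not_mem {G : SepGraph} (A : G.AdaptableStructure)
    {H : Set G.V} (hH : ∀ e : G.Ed, G.s e ∈ H → G.r e ∈ H) :
    ∀ v ∉ H, ∀ X ∈ G.C v, ∃ e ∈ X, G.r e ∉ H := by
  intro v hv X hX
  by_cases hfree : A.free v
  · obtain ⟨e, ⟨heX, her⟩, -⟩ := A.free_loop v hfree X hX
    exact ⟨e, heX, her ▸ hv⟩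
  · obtain ⟨e, -, -, hs, -, hreach, -⟩ := A.reg_two_edges v hfree
    obtain ⟨Y, hY, heY⟩ := G.c_cover e
    obtain ⟨_, -, huniq⟩ := A.reg_unique_C v hfree
    have hYX : Y = X := (huniq Y (hs ▸ hY)).trans (huniq X hX).symm
    exact ⟨e, hYX ▸ heY, fun he => hv (hreach.1.mem_of_hereditary hH he)⟩

variable (G : SepGraph)

section UniversalProperty

variable {N : Type*} [AddCommMonoid N]

noncomputable def lift (g : G.V → N) (hg : ∀ v, ∀ X ∈ G.C v, g v = ∑ e ∈ X, g (G.r e)) :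
    G.M →+ N :=
  G.mCon.lift (Finsupp.liftAddHom fun v => multiplesHom N (g v)) <| show G.mCon ≤ _ by
    refine AddCon.addConGen_le.2 ?_
    rintro _ _ ⟨v, X, hX, rfl, rfl⟩
    simp [AddCon.ker_rel, vert, rX, hg v X hX]

@[simp]
theorem lift_gen (g : G.V → N) (hg : ∀ v, ∀ X ∈ G.C v, g v = ∑ e ∈ X, g (G.r e)) (v : G.V) :
    G.lift g hg (G.gen v) = g v := by
  show G.mCon.lift _ _ (G.mCon.mk' (G.vert v)) = g v
  rw [AddCon.lift_mk']
  simp [vert]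

theorem gen_eq_sum {v : G.V} {X : Finset G.Ed} (hX : X ∈ G.C v) :
    G.gen v = ∑ e ∈ X, G.gen (G.r e) := by
  have h : G.mCon.mk' (G.vert v) = G.mCon.mk' (G.rX X) :=
    (AddCon.eq G.mCon).2 (AddConGen.Rel.of _ _ ⟨v, X, hX, rfl, rfl⟩)
  rw [rX, map_sum] at h
  exact h

theorem gen_induction {p : G.M → Prop} (zero : p 0) (gen : ∀ v, p (G.gen v))
    (add : ∀ x y, p x → p y → p (x + y)) (x : G.M) : p x := by
  obtain ⟨c, rfl⟩ := G.mCon.mk'_surjective x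
  induction c using Finsupp.induction with
  | zero => exact (map_zero G.mCon.mk').symm ▸ zero
  | single_add v n c _ hn ih =>
    rw [map_add]
    refine add _ _ ?_ ih
    clear hn
    induction n with
    | zero => exact (by simp : G.mCon.mk' (Finsupp.single v 0) = 0).symm ▸ zero
    | succ n ihn =>
      rw [Finsupp.single_add, map_add]
      exact add _ _ ihn (gen v)

theorem hom_ext {f f' : G.M →+ N} (h : ∀ v, f (G.gen v) = f' (G.gen v)) : f = f' :=
  AddMonoidHom.ext <| G.gen_induction (by simp) h fun x y hx hy => by simp [hx, hy]

end UniversalProperty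

variable {H : Set G.V} (hH : ∀ e : G.Ed, G.s e ∈ H → G.r e ∈ H)

theorem exists_restrict_C_map_eq {v : G.V} (hv : v ∈ H) {X : Finset G.Ed} (hX : X ∈ G.C v) :
    ∃ X' ∈ (G.restrict H hH).C ⟨v, hv⟩, X'.map (Function.Embedding.subtype _) = X := by
  classical
  have hmap : (X.subtype fun e => G.s e ∈ H).map (Function.Embedding.subtype _) = X := by
    rw [Finset.subtype_map, Finset.filter_true_of_mem]
    intro e he
    rwa [G.c_src v X hX e he]
  exact ⟨X.subtype _, show Finset.map _ _ ∈ G.C v by rwa [hmap], hmap⟩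

noncomputable def restrictIncl : (G.restrict H hH).M →+ G.M :=
  (G.restrict H hH).lift (fun v => G.gen v.1) fun _ X hX =>
    (G.gen_eq_sum hX).trans (Finset.sum_map X (Function.Embedding.subtype _) _)

@[simp]
theorem restrictIncl_gen (v : H) : G.restrictIncl hH ((G.restrict H hH).gen v) = G.gen v.1 :=
  (G.restrict H hH).lift_gen (fun v => G.gen v.1) _ v

variable (hout : ∀ v ∉ H, ∀ X ∈ G.C v, ∃ e ∈ X, G.r e ∉ H)

open scoped Classical in
noncomputable def restrictRetraction : G.M →+ WithTop (G.restrict H hH).M :=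
  G.lift (fun v => if hv : v ∈ H then ((G.restrict H hH).gen ⟨v, hv⟩ : WithTop _) else ⊤)
    fun v X hX => by
      by_cases hv : v ∈ H
      · obtain ⟨X', hX', rfl⟩ := G.exists_restrict_C_map_eq hH hv hX
        rw [dif_pos hv, (G.restrict H hH).gen_eq_sum hX', WithTop.coe_sum]
        refine (Finset.sum_congr rfl fun e _ => ?_).trans (Finset.sum_map X' _ _).symm
        split_ifs with he
        · rfl
        · exact absurd (hH e.1 e.2) he
      · obtain ⟨e, he, her⟩ := hout v hv X hX
        rw [dif_neg hv, ← Finset.add_sum_erase X _ he, dif_neg her, WithTop.top_add]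

theorem restrictRetraction_gen_of_mem {v : G.V} (hv : v ∈ H) :
    G.restrictRetraction hH hout (G.gen v) = (G.restrict H hH).gen ⟨v, hv⟩ := by
  simp [restrictRetraction, hv]

theorem restrictRetraction_gen_of_not_mem {v : G.V} (hv : v ∉ H) :
    G.restrictRetraction hH hout (G.gen v) = ⊤ := by
  simp [restrictRetraction, hv]

theorem restrictRetraction_restrictIncl (x : (G.restrict H hH).M) :
    G.restrictRetraction hH hout (G.restrictIncl hH x) = x := by
  have h : (G.restrictRetraction hH hout).comp (G.restrictIncl hH) = WithTop.addHom :=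
    (G.restrict H hH).hom_ext fun v => by
      rw [AddMonoidHom.comp_apply, G.restrictIncl_gen hH v,
        G.restrictRetraction_gen_of_mem hH hout v.2]
      rfl
  exact DFunLike.congr_fun h x

theorem restrictIncl_injective (hout : ∀ v ∉ H, ∀ X ∈ G.C v, ∃ e ∈ X, G.r e ∉ H) :
    Function.Injective (G.restrictIncl hH) := fun x y hxy =>
  WithTop.coe_injective <| by
    rw [← G.restrictRetraction_restrictIncl hH hout x, hxy, G.restrictRetraction_restrictIncl]

theorem range_restrictIncl :
    Set.range (G.restrictIncl hH) = {y | G.restrictRetraction hH hout y ≠ ⊤} := by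
  refine subset_antisymm ?_ fun y => ?_
  · rintro _ ⟨x, rfl⟩
    simp [restrictRetraction_restrictIncl]
  refine G.gen_induction (p := fun y => G.restrictRetraction hH hout y ≠ ⊤ →
    y ∈ Set.range (G.restrictIncl hH)) (fun _ => ⟨0, map_zero _⟩) (fun v hv => ?_)
    (fun y z hy hz hyz => ?_) y
  · by_cases hvH : v ∈ H
    · exact ⟨_, G.restrictIncl_gen hH ⟨v, hvH⟩⟩
    · exact absurd (G.restrictRetraction_gen_of_not_mem hH hout hvH) hv
  · rw [map_add, WithTop.add_ne_top] at hyz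
    obtain ⟨⟨a, rfl⟩, ⟨b, rfl⟩⟩ := And.intro (hy hyz.1) (hz hyz.2)
    exact ⟨a + b, map_add _ a b⟩

end SepGraph

theorem isOrderIdeal_setOf_ne_top {M N : Type} [AddCommMonoid M] [AddMonoid N]
    (π : M →+ WithTop N) : IsOrderIdeal {y | π y ≠ ⊤} := by
  refine ⟨by simp, fun x hx y hy => ?_, fun x y ⟨z, hz⟩ hy => ?_⟩
  · simpa [WithTop.add_ne_top] using And.intro hx hy
  · rw [Set.mem_ofPred_eq, ← hz, map_add, WithTop.add_ne_top] at hy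
    exact hy.1

/-- For an adaptable separated graph `(E,C)` and a hereditary
subset `H ⊆ E⁰`, the natural monoid homomorphism `M(E_H,C^H) → M(E,C)` sending
`a_v` to `a_v` (`v ∈ H`) is injective, and its image is an order-ideal of `M(E,C)`. -/
theorem stmt13 (G : SepGraph) (A : G.AdaptableStructure) (H : Set G.V)
    (hH : ∀ e : G.Ed, G.s e ∈ H → G.r e ∈ H) :
    ∃ f : (G.restrict H hH).M →+ G.M,
      (∀ v : H, f ((G.restrict H hH).gen v) = G.gen v.1) ∧
      Function.Injective f ∧ IsOrderIdeal (Set.range f) := by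
  have hout := A.exists_target_not_mem hH
  refine ⟨G.restrictIncl hH, G.restrictIncl_gen hH, G.restrictIncl_injective hH hout, ?_⟩
  rw [G.range_restrictIncl hH hout]
  exact isOrderIdeal_setOf_ne_top _
end
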